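/- The expected number of unique samples drawn by oracle sampling satisfies E[|S|] ≤ 1 + B·ε, where ε = 1 − max_{1≤i≤n} w_i. -/

import Mathlib

/-! All samples equal to `i₀` together contribute at most one element to `S`, so
`|S| ≤ 1 + #{j | i_j ≠ i₀}`. Each of the `B` samples differs from `i₀` with probability
`1 - w i₀`, and linearity of expectation gives the bound. -/

open Finset

theorem card_image_le_one_add_card_filter_ne {α β : Type*} [DecidableEq β]
    (s : Finset α) (f : α → β) (b : β) :
    #(s.image f) ≤ 1 + #{x ∈ s | f x ≠ b} := by
  have hsub : s.image f ⊆ insert b ({x ∈ s | f x ≠ b}.image f) := by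
    intro y hy
    obtain ⟨x, hx, rfl⟩ := mem_image.1 hy
    by_cases h : f x = b
    · simp [h]
    · exact mem_insert_of_mem (mem_image_of_mem f (mem_filter.2 ⟨hx, h⟩))
  calc #(s.image f) ≤ #(insert b ({x ∈ s | f x ≠ b}.image f)) := card_le_card hsub
    _ ≤ #({x ∈ s | f x ≠ b}.image f) + 1 := card_insert_le _ _
    _ ≤ 1 + #{x ∈ s | f x ≠ b} := by grind [card_image_le]

section

variable {ι α : Type*} [Fintype ι] [DecidableEq ι] [Fintype α] {w : α → ℝ}

theorem sum_prod_apply_eq_one (hw : ∑ a, w a = 1) :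
    ∑ f : ι → α, ∏ k, w (f k) = 1 := by
  rw [← Fintype.prod_sum, hw, prod_const_one]

theorem sum_prod_mul_apply (hw : ∑ a, w a = 1) (g : α → ℝ) (j : ι) :
    ∑ f : ι → α, (∏ k, w (f k)) * g (f j) = ∑ a, w a * g a := by
  have hsplit : ∀ f : ι → α, (∏ k, w (f k)) * g (f j) =
      ∏ k, (if k = j then w (f k) * g (f k) else w (f k)) := by
    intro f
    rw [← Fintype.prod_ite_eq' j fun k => g (f k), ← prod_mul_distrib]
    exact prod_congr rfl fun k _ => by split_ifs <;> simp [*]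
  simp_rw [hsplit, ← Fintype.prod_sum (fun k a => if k = j then w a * g a else w a)]
  simp_rw [sum_ite_irrel, hw]
  exact Fintype.prod_ite_eq' j _

theorem sum_prod_mul_card_filter_ne [DecidableEq α] (hw : ∑ a, w a = 1) (b : α) :
    ∑ f : ι → α, (∏ k, w (f k)) * (#{j | f j ≠ b} : ℝ) = Fintype.card ι * (1 - w b) := by
  have hmass : ∑ a, w a * (if a ≠ b then 1 else 0) = 1 - w b := by
    simp_rw [mul_ite, mul_one, mul_zero, ← sum_filter, filter_ne', sum_erase_eq_sub (mem_univ b),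
      hw]
  simp_rw [card_filter, Nat.cast_sum, Nat.cast_ite, Nat.cast_one, Nat.cast_zero, mul_sum]
  rw [sum_comm]
  simp_rw [sum_prod_mul_apply hw (fun a => if a ≠ b then 1 else 0), hmass, sum_const, card_univ,
    nsmul_eq_mul]

end

theorem expected_unique_samples_le_general
    {n : ℕ} (w : Fin n → ℝ)
    (hw_nonneg : ∀ i, 0 ≤ w i) (hw_sum : ∑ i, w i = 1)
    (B : ℕ)
    (i₀ : Fin n) :
    ∑ f : Fin B → Fin n,
        (∏ j, w (f j)) * ((Finset.image f Finset.univ).card : ℝ)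
      ≤ 1 + (B : ℝ) * (1 - w i₀) := by
  calc ∑ f : Fin B → Fin n, (∏ j, w (f j)) * ((Finset.image f Finset.univ).card : ℝ)
      ≤ ∑ f : Fin B → Fin n, (∏ j, w (f j)) * (1 + #{j | f j ≠ i₀} : ℝ) := by
        gcongr with f
        · exact prod_nonneg fun j _ => hw_nonneg _
        · exact_mod_cast card_image_le_one_add_card_filter_ne _ _ _
    _ = 1 + B * (1 - w i₀) := by
        simp only [mul_add, mul_one, sum_add_distrib, sum_prod_apply_eq_one hw_sum,
          sum_prod_mul_card_filter_ne hw_sum, Fintype.card_fin]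

/-- **Expected computation budget of oracle sampling.**
`B` iid samples from the distribution `w` are modeled by summing over all tuples
`f : Fin B → Fin n` with probability `∏ j, w (f j)`; the set of unique samples is
`S = Finset.image f Finset.univ`. With `w i₀ = max_i w i` and `ε = 1 − w i₀`,
the expected number of unique samples satisfies `E[|S|] ≤ 1 + B·ε`. -/
theorem expected_unique_samples_le
    {n : ℕ} (hn : 1 ≤ n) (w : Fin n → ℝ)
    (hw_nonneg : ∀ i, 0 ≤ w i) (hw_sum : ∑ i, w i = 1)
    (B : ℕ) (hB : 1 ≤ B)
    (i₀ : Fin n) (hmax : ∀ i, w i ≤ w i₀) :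
    ∑ f : Fin B → Fin n,
        (∏ j, w (f j)) * ((Finset.image f Finset.univ).card : ℝ)
      ≤ 1 + (B : ℝ) * (1 - w i₀) :=
  expected_unique_samples_le_general w hw_nonneg hw_sum B i₀
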